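/- Let M be a model category and let G : 2ⁿ ⥤ M be a functor such that for every x ∈ 2ⁿ with x ≠ ⊥ the latching map L_x G → G(x) is a trivial cofibration in M. Then the morphism G(⊥) → G(⊤) induced by ⊥ ≤ ⊤ is a trivial cofibration in M. -/

import Mathlib

open CategoryTheory CategoryTheory.Limits

universe v u

/-- `f` is a retract of `g` in the arrow category. -/
def IsRetract {C : Type u} [Category.{v} C] {X Y X' Y' : C} (f : X ⟶ Y) (g : X' ⟶ Y') : Prop :=
  ∃ (i : X ⟶ X') (r : X' ⟶ X) (i' : Y ⟶ Y') (r' : Y' ⟶ Y),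
    i ≫ r = 𝟙 X ∧ i' ≫ r' = 𝟙 Y ∧ i ≫ g = f ≫ i' ∧ g ≫ r' = r ≫ f

/-- A model structure on a category: three classes of morphisms (weak equivalences,
cofibrations, fibrations) satisfying Quillen's axioms (two-out-of-three, closure
under retracts, lifting, and factorization). -/
structure ModelStructure (C : Type u) [Category.{v} C] where
  W : MorphismProperty C
  Cof : MorphismProperty C
  Fib : MorphismProperty C
  w_comp : ∀ {X Y Z : C} (f : X ⟶ Y) (g : Y ⟶ Z), W f → W g → W (f ≫ g)
  w_cancel_left : ∀ {X Y Z : C} (f : X ⟶ Y) (g : Y ⟶ Z), W f → W (f ≫ g) → W g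
  w_cancel_right : ∀ {X Y Z : C} (f : X ⟶ Y) (g : Y ⟶ Z), W g → W (f ≫ g) → W f
  w_retract : ∀ {X Y X' Y' : C} (f : X ⟶ Y) (g : X' ⟶ Y'), IsRetract f g → W g → W f
  cof_retract : ∀ {X Y X' Y' : C} (f : X ⟶ Y) (g : X' ⟶ Y'), IsRetract f g → Cof g → Cof f
  fib_retract : ∀ {X Y X' Y' : C} (f : X ⟶ Y) (g : X' ⟶ Y'), IsRetract f g → Fib g → Fib f
  lift_cof_trivFib : ∀ {A B X Y : C} (i : A ⟶ B) (p : X ⟶ Y),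
    Cof i → Fib p → W p → HasLiftingProperty i p
  lift_trivCof_fib : ∀ {A B X Y : C} (i : A ⟶ B) (p : X ⟶ Y),
    Cof i → W i → Fib p → HasLiftingProperty i p
  factor_cof_trivFib : ∀ {X Y : C} (f : X ⟶ Y), ∃ (Z : C) (g : X ⟶ Z) (h : Z ⟶ Y),
    Cof g ∧ Fib h ∧ W h ∧ g ≫ h = f
  factor_trivCof_fib : ∀ {X Y : C} (f : X ⟶ Y), ∃ (Z : C) (g : X ⟶ Z) (h : Z ⟶ Y),
    Cof g ∧ W g ∧ Fib h ∧ g ≫ h = f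

variable {M : Type u} [Category.{v} M]

/-- An object is cofibrant if the map from the initial object is a cofibration. -/
def ModelStructure.Cofibrant [HasInitial M] (m : ModelStructure M) (X : M) : Prop :=
  m.Cof (initial.to X)

section Latching

variable {P : Type} [Preorder P] [HasColimitsOfSize.{0, 0} M]

/-- The latching object of `F : P ⥤ M` at `x`: the colimit of `F` over the full
subcategory of all `y < x`. -/
noncomputable def latchingObj (F : P ⥤ M) (x : P) : M :=
  colimit (ObjectProperty.ι (fun y : P => y < x) ⋙ F)

/-- The canonical (latching) map `L_x F ⟶ F x`. -/
noncomputable def latchingMap (F : P ⥤ M) (x : P) : latchingObj F x ⟶ F.obj x :=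
  colimit.desc (ObjectProperty.ι (fun y : P => y < x) ⋙ F)
    { pt := F.obj x
      ι :=
        { app := fun y => F.map (homOfLE y.property.le)
          naturality := by
            intro a b f
            dsimp
            rw [Category.comp_id, ← F.map_comp]
            rfl } }

/-- The map induced by a natural transformation on latching objects. -/
noncomputable def latchingObjHom {F G : P ⥤ M} (τ : F ⟶ G) (x : P) :
    latchingObj F x ⟶ latchingObj G x :=
  colimMap (Functor.whiskerLeft (ObjectProperty.ι (fun y : P => y < x)) τ)

lemma latching_square {F G : P ⥤ M} (τ : F ⟶ G) (x : P) :
    latchingMap F x ≫ τ.app x = latchingObjHom τ x ≫ latchingMap G x := by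
  apply colimit.hom_ext
  intro y
  simp [latchingMap, latchingObjHom, latchingObj]

/-- The relative latching map of `τ : F ⟶ G` at `x`:
the induced map `(L_x G) ⊔_{L_x F} F x ⟶ G x`. -/
noncomputable def relLatchingMap {F G : P ⥤ M} (τ : F ⟶ G) (x : P) :
    pushout (latchingMap F x) (latchingObjHom τ x) ⟶ G.obj x :=
  pushout.desc (τ.app x) (latchingMap G x) (latching_square τ x)

end Latching

attribute [local instance 2000] Preorder.smallCategory

/-
Any fibration `p` has the right lifting property against `G ⊥ ⟶ G ⊤`: given a lifting problem,
one builds a compatible family of lifts `G x ⟶ X` over larger and larger lower sets of the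
finite poset, adding a minimal missing `x` at each step. Since everything below `x` is already
handled, the lifts there form a cocone on the latching diagram at `x`, and the lift for `x` comes
from lifting the latching map against `p`. A map with the left lifting property against all
fibrations is a retract of a trivial cofibration, hence a trivial cofibration.
-/

namespace ModelStructure

variable {C : Type u} [Category.{v} C] (m : ModelStructure C)

theorem cof_and_w_of_forall_fib_hasLiftingProperty {A B : C} (i : A ⟶ B)
    (hi : ∀ ⦃X Y : C⦄ (p : X ⟶ Y), m.Fib p → HasLiftingProperty i p) : m.Cof i ∧ m.W i := by
  obtain ⟨Z, j, q, hj_cof, hj_w, hq, hfac⟩ := m.factor_trivCof_fib i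
  have sq : CommSq j i q (𝟙 B) := ⟨by rw [hfac, Category.comp_id]⟩
  have := hi q hq
  have ret : IsRetract i j :=
    ⟨𝟙 A, 𝟙 A, sq.lift, q, Category.comp_id _, sq.fac_right,
      by rw [Category.id_comp, sq.fac_left], by rw [hfac, Category.id_comp]⟩
  exact ⟨m.cof_retract _ _ ret hj_cof, m.w_retract _ _ ret hj_w⟩

end ModelStructure

theorem map_homOfLE_self {P : Type*} [Preorder P] (G : P ⥤ M) {x : P} (h : x ≤ x) :
    G.map (homOfLE h) = 𝟙 (G.obj x) :=
  G.map_id x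

section Latching

variable {P : Type} [Preorder P] [HasColimitsOfSize.{0, 0} M] (G : P ⥤ M) {x : P}

noncomputable def latchingι {y : P} (hy : y < x) : G.obj y ⟶ latchingObj G x :=
  colimit.ι (ObjectProperty.ι (· < x) ⋙ G) ⟨y, hy⟩

theorem latchingι_latchingMap {y : P} (hy : y < x) :
    latchingι G hy ≫ latchingMap G x = G.map (homOfLE hy.le) :=
  colimit.ι_desc _ _

variable {G}

theorem latchingObj_hom_ext {Z : M} {f g : latchingObj G x ⟶ Z}
    (h : ∀ y (hy : y < x), latchingι G hy ≫ f = latchingι G hy ≫ g) : f = g :=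
  colimit.hom_ext fun y => h y.1 y.2

end Latching

section LatchingLift

variable {P : Type} [PartialOrder P] [BoundedOrder P] [HasColimitsOfSize.{0, 0} M]

variable (G : P ⥤ M) {X Y : M} (p : X ⟶ Y) (u : G.obj ⊥ ⟶ X) (v : G.obj ⊤ ⟶ Y)

/-- A solution of the lifting problem `(u, v)` for `G ⊥ ⟶ G ⊤` against `p`, defined on `S` only. -/
structure PartialLift (S : Set P) where
  app : ∀ x ∈ S, G.obj x ⟶ X
  naturality : ∀ {y z : P} (hyz : y ≤ z) (hy : y ∈ S) (hz : z ∈ S),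
    G.map (homOfLE hyz) ≫ app z hz = app y hy
  app_bot : ∀ h : ⊥ ∈ S, app ⊥ h = u
  app_comp : ∀ x (hx : x ∈ S), app x hx ≫ p = G.map (homOfLE le_top) ≫ v

namespace PartialLift

variable {G p u v}

def ofBot (w : u ≫ p = G.map (homOfLE bot_le) ≫ v) : PartialLift G p u v {⊥} where
  app x hx := G.map (homOfLE (Set.mem_singleton_iff.mp hx).le) ≫ u
  naturality _ _ _ := by rw [← Functor.map_comp_assoc, homOfLE_comp]
  app_bot _ := by rw [map_homOfLE_self, Category.id_comp]
  app_comp _ _ := by rw [Category.assoc, w, ← Functor.map_comp_assoc, homOfLE_comp]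

variable {S : Set P} (L : PartialLift G p u v S) {x : P} (hlt : ∀ y < x, y ∈ S)

def latchingCocone : Cocone (ObjectProperty.ι (· < x) ⋙ G) where
  pt := X
  ι :=
    { app y := L.app y.1 (hlt y.1 y.2)
      naturality a b f :=
        (L.naturality (leOfHom f.hom) (hlt a.1 a.2) (hlt b.1 b.2)).trans
          (Category.comp_id _).symm }

noncomputable def latchingDesc : latchingObj G x ⟶ X :=
  colimit.desc _ (L.latchingCocone hlt)

theorem latchingι_latchingDesc {y : P} (hy : y < x) :
    latchingι G hy ≫ L.latchingDesc hlt = L.app y (hlt y hy) :=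
  colimit.ι_desc _ _

theorem latchingCommSq :
    CommSq (L.latchingDesc hlt) (latchingMap G x) p (G.map (homOfLE le_top) ≫ v) :=
  ⟨latchingObj_hom_ext fun y hy => by
    rw [← Category.assoc, latchingι_latchingDesc, L.app_comp, ← Category.assoc,
      latchingι_latchingMap, ← Functor.map_comp_assoc, homOfLE_comp]⟩

variable [HasLiftingProperty (latchingMap G x) p]

noncomputable def latchingLift : G.obj x ⟶ X :=
  (L.latchingCommSq hlt).lift

theorem map_comp_latchingLift {y : P} (hy : y < x) :
    G.map (homOfLE hy.le) ≫ L.latchingLift hlt = L.app y (hlt y hy) := by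
  rw [← latchingι_latchingMap G hy, Category.assoc, latchingLift, CommSq.fac_left,
    latchingι_latchingDesc]

theorem latchingLift_comp : L.latchingLift hlt ≫ p = G.map (homOfLE le_top) ≫ v :=
  CommSq.fac_right _

open Classical in
noncomputable def extend (hS : IsLowerSet S) (hx : x ≠ ⊥) : PartialLift G p u v (insert x S) where
  app z hz := if hzS : z ∈ S then L.app z hzS
    else G.map (homOfLE (hz.resolve_right hzS).le) ≫ L.latchingLift hlt
  naturality {y z} hyz hy hz := by
    by_cases hzS : z ∈ S
    · simp only [dif_pos hzS, dif_pos (hS hyz hzS)]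
      exact L.naturality hyz _ _
    obtain rfl : z = x := hz.resolve_right hzS
    by_cases hyS : y ∈ S
    · rw [dif_neg hzS, dif_pos hyS, map_homOfLE_self, Category.id_comp]
      exact L.map_comp_latchingLift hlt (lt_of_le_of_ne hyz fun h => hzS (h ▸ hyS))
    · obtain rfl : y = z := hy.resolve_right hyS
      simp only [dif_neg hzS, map_homOfLE_self, Category.id_comp]
  app_bot h := by
    rw [dif_pos (h.resolve_left (Ne.symm hx))]
    exact L.app_bot _
  app_comp z hz := by
    by_cases hzS : z ∈ S
    · rw [dif_pos hzS]
      exact L.app_comp z hzS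
    · rw [dif_neg hzS, Category.assoc, latchingLift_comp, ← Functor.map_comp_assoc, homOfLE_comp]

end PartialLift

theorem PartialLift.nonempty_univ [Finite P] (w : u ≫ p = G.map (homOfLE bot_le) ≫ v)
    (hlift : ∀ x, x ≠ ⊥ → HasLiftingProperty (latchingMap G x) p) :
    Nonempty (PartialLift G p u v Set.univ) := by
  obtain ⟨S, ⟨hS, hbot, ⟨L⟩⟩, hmax⟩ := Set.Finite.exists_maximal
    (Set.toFinite {S : Set P | IsLowerSet S ∧ ⊥ ∈ S ∧ Nonempty (PartialLift G p u v S)})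
    ⟨{⊥}, fun _ _ hab hb => le_bot_iff.mp (hb ▸ hab), rfl, ⟨PartialLift.ofBot w⟩⟩
  obtain h | ⟨x, hx⟩ := Sᶜ.eq_empty_or_nonempty
  · exact Set.compl_empty_iff.mp h ▸ ⟨L⟩
  obtain ⟨x, hxmin⟩ := (Set.toFinite Sᶜ).exists_minimal ⟨x, hx⟩
  have hlt : ∀ y < x, y ∈ S := fun y hy => by_contra fun hyS => (hxmin.not_lt hyS hy)
  have hxbot : x ≠ ⊥ := fun h => hxmin.prop (h ▸ hbot)
  have := hlift x hxbot
  have hinsert : IsLowerSet (insert x S) := fun a b hba ha =>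
    ha.elim (fun hax => (eq_or_lt_of_le (hax ▸ hba)).imp id (hlt b)) fun haS => Or.inr (hS hba haS)
  exact absurd (hmax ⟨hinsert, Or.inr hbot, ⟨L.extend hlt hS hxbot⟩⟩ (Set.subset_insert x S)
    (Set.mem_insert x S)) hxmin.prop

theorem hasLiftingProperty_map_bot_top [Finite P]
    (hlift : ∀ x, x ≠ ⊥ → HasLiftingProperty (latchingMap G x) p) :
    HasLiftingProperty (G.map (homOfLE bot_le : (⊥ : P) ⟶ ⊤)) p where
  sq_hasLift {u v} sq := by
    obtain ⟨L⟩ := PartialLift.nonempty_univ G p u v sq.w hlift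
    exact ⟨⟨{ l := L.app ⊤ (Set.mem_univ _)
              fac_left := by rw [L.naturality bot_le (Set.mem_univ _) (Set.mem_univ _), L.app_bot]
              fac_right := by rw [L.app_comp, map_homOfLE_self, Category.id_comp] }⟩⟩

end LatchingLift

theorem statement5_general [HasColimits M] (m : ModelStructure M)
    (n : ℕ) (G : (Fin n → Bool) ⥤ M)
    (h : ∀ x : Fin n → Bool, x ≠ ⊥ →
      m.Cof (latchingMap G x) ∧ m.W (latchingMap G x)) :
    m.Cof (G.map (homOfLE (bot_le : (⊥ : Fin n → Bool) ≤ ⊤))) ∧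
    m.W (G.map (homOfLE (bot_le : (⊥ : Fin n → Bool) ≤ ⊤))) :=
  m.cof_and_w_of_forall_fib_hasLiftingProperty _ fun _ _ p hp =>
    hasLiftingProperty_map_bot_top G p fun x hx =>
      m.lift_trivCof_fib _ p (h x hx).1 (h x hx).2 hp

/-- If `G : 2ⁿ ⥤ M` has all of its latching maps `L_x G ⟶ G x`
at `x ≠ ⊥` trivial cofibrations, then the induced map `G ⊥ ⟶ G ⊤` is a trivial
cofibration. -/
theorem statement5 [HasLimits M] [HasColimits M] (m : ModelStructure M)
    (n : ℕ) (G : (Fin n → Bool) ⥤ M)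
    (h : ∀ x : Fin n → Bool, x ≠ ⊥ →
      m.Cof (latchingMap G x) ∧ m.W (latchingMap G x)) :
    m.Cof (G.map (homOfLE (bot_le : (⊥ : Fin n → Bool) ≤ ⊤))) ∧
    m.W (G.map (homOfLE (bot_le : (⊥ : Fin n → Bool) ≤ ⊤))) :=
  statement5_general m n G h
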